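/- Fix 0 < θ < 1 and k ≥ 2. Let f_n: {0,1}^{m_n} → {0,1}^{k^d} be functions where each output bit depends on at most c input bits (c constant), let W be a vector of independent uniform bits, and X' = f_n(W). Then the total variation distance between the law of X' and the law of the leaf labels X^(d) of the broadcast process is bounded below by θ^{2d'}/4 > 0, where d' is the smallest positive integer with θ^{2d'} ≤ 2^{-2c}, provided n = k^d ≥ k^{d'}. -/

import Mathlib

open Finset

/-- Outcome space for the broadcast process on the `k`-ary tree of depth `d`:
a root label together with, for each non-root vertex (at level `i+1`, indexed by
`Fin (k ^ (i+1))`), a flip indicator for the edge into it (`true` means the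
label is flipped relative to the parent's label). -/
abbrev BOmega (k d : ℕ) := Bool × ∀ i : Fin d, Fin (k ^ ((i : ℕ) + 1)) → Bool

/-- The ancestor at level `i+1` of the leaf `v` (a vertex at level `d`). -/
def anc (k d : ℕ) (v : Fin (k ^ d)) (i : Fin d) : Fin (k ^ ((i : ℕ) + 1)) :=
  ⟨(v : ℕ) / k ^ (d - ((i : ℕ) + 1)), by
    rcases Nat.eq_zero_or_pos k with hk | hk
    · subst hk
      have hd : 0 < d := i.pos
      exact absurd v.isLt (by simp [Nat.zero_pow hd])
    · have h1 : (i : ℕ) + 1 ≤ d := i.isLt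
      refine Nat.div_lt_of_lt_mul ?_
      have h2 : k ^ ((i : ℕ) + 1) * k ^ (d - ((i : ℕ) + 1)) = k ^ d := by
        rw [← pow_add]; congr 1; omega
      rw [mul_comm, h2]; exact v.isLt⟩

/-- The weight (probability) of an outcome of the broadcast process with
parameter `θ`: the root label is uniform, and each flip indicator is
independently `true` with probability `(1-θ)/2` (so each vertex copies its
parent's label with probability `(1+θ)/2`). -/
noncomputable def bwt (θ : ℝ) {k d : ℕ} (ω : BOmega k d) : ℝ :=
  (1 / 2) * ∏ i : Fin d, ∏ e : Fin (k ^ ((i : ℕ) + 1)),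
    (if ω.2 i e then (1 - θ) / 2 else (1 + θ) / 2)

/-- The label `X^(d)_v` of the leaf `v`: the root label, flipped once for every
flipped edge on the path from the root down to `v`. -/
def leafLabel {k d : ℕ} (ω : BOmega k d) (v : Fin (k ^ d)) : Bool :=
  xor ω.1 (decide ((univ.filter fun i : Fin d => ω.2 i (anc k d v i)).card % 2 = 1))

open Classical in
/-- Probability of an event under the broadcast process with parameter `θ`. -/
noncomputable def bPr (θ : ℝ) (k d : ℕ) (A : BOmega k d → Prop) : ℝ :=
  ∑ ω : BOmega k d, if A ω then bwt θ ω else 0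

noncomputable def bw (θ : ℝ) (b : Bool) : ℝ := if b then (1 - θ) / 2 else (1 + θ) / 2

def sgn (b : Bool) : ℝ := if b then -1 else 1

lemma sum_g_prod {k d : ℕ} (F : ∀ i : Fin d, Fin (k ^ ((i : ℕ) + 1)) → Bool → ℝ) :
    ∑ g : (∀ i : Fin d, Fin (k ^ ((i : ℕ) + 1)) → Bool), ∏ i, ∏ e, F i e (g i e)
      = ∏ i, ∏ e, (F i e true + F i e false) := by
  calc ∑ g : (∀ i : Fin d, Fin (k ^ ((i : ℕ) + 1)) → Bool), ∏ i, ∏ e, F i e (g i e)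
      = ∏ i : Fin d, ∑ h : Fin (k ^ ((i : ℕ) + 1)) → Bool, ∏ e, F i e (h e) :=
        (Fintype.prod_sum (κ := fun i : Fin d => Fin (k ^ ((i : ℕ) + 1)) → Bool)
          (fun i h => ∏ e, F i e (h e))).symm
    _ = ∏ i : Fin d, ∏ e, ∑ b : Bool, F i e b :=
        Finset.prod_congr rfl fun i _ =>
          (Fintype.prod_sum (κ := fun _ : Fin (k ^ ((i : ℕ) + 1)) => Bool)
            (fun e b => F i e b)).symm
    _ = ∏ i, ∏ e, (F i e true + F i e false) :=
        Finset.prod_congr rfl fun i _ => Finset.prod_congr rfl fun e _ => Fintype.sum_bool _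

lemma sum_pi_bw {θ : ℝ} {k d : ℕ} :
    ∑ g : (∀ i : Fin d, Fin (k ^ ((i : ℕ) + 1)) → Bool), ∏ i, ∏ e, bw θ (g i e) = 1 := by
  rw [sum_g_prod (fun _ _ b => bw θ b)]
  calc ∏ i : Fin d, ∏ e : Fin (k ^ ((i : ℕ) + 1)), (bw θ true + bw θ false)
      = ∏ i : Fin d, ∏ e : Fin (k ^ ((i : ℕ) + 1)), (1 : ℝ) := by
        refine Finset.prod_congr rfl fun i _ => Finset.prod_congr rfl fun e _ => ?_
        simp [bw]; ring
    _ = 1 := by simp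

lemma corr {k d : ℕ} (θ : ℝ) (u v : Fin (k ^ d)) :
    ∑ g : (∀ i : Fin d, Fin (k ^ ((i : ℕ) + 1)) → Bool),
      (∏ i, ∏ e, bw θ (g i e)) *
        ((∏ i, sgn (g i (anc k d u i))) * (∏ i, sgn (g i (anc k d v i))))
      = θ ^ (2 * (univ.filter fun i : Fin d => anc k d u i ≠ anc k d v i).card) := by
  have key : ∀ g : (∀ i : Fin d, Fin (k ^ ((i : ℕ) + 1)) → Bool),
      (∏ i, ∏ e, bw θ (g i e)) *
        ((∏ i, sgn (g i (anc k d u i))) * (∏ i, sgn (g i (anc k d v i))))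
      = ∏ i, ∏ e, (bw θ (g i e) * ((if e = anc k d u i then sgn (g i e) else 1) *
          (if e = anc k d v i then sgn (g i e) else 1))) := by
    intro g
    rw [← Finset.prod_mul_distrib, ← Finset.prod_mul_distrib]
    refine Finset.prod_congr rfl fun i _ => ?_
    rw [Finset.prod_mul_distrib, Finset.prod_mul_distrib]
    congr 1
    rw [Finset.prod_ite_eq' univ (anc k d u i) (fun e => sgn (g i e)),
        Finset.prod_ite_eq' univ (anc k d v i) (fun e => sgn (g i e))]
    simp
  rw [Finset.sum_congr rfl fun g _ => key g,
    sum_g_prod (fun i e b => bw θ b * ((if e = anc k d u i then sgn b else 1) *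
      (if e = anc k d v i then sgn b else 1)))]
  have step1 : ∀ (i : Fin d),
      (∏ e : Fin (k ^ ((i : ℕ) + 1)),
        (bw θ true * ((if e = anc k d u i then sgn true else 1) *
            (if e = anc k d v i then sgn true else 1)) +
         bw θ false * ((if e = anc k d u i then sgn false else 1) *
            (if e = anc k d v i then sgn false else 1))))
      = (if anc k d u i = anc k d v i then (1:ℝ) else θ ^ 2) := by
    intro i
    have he : ∀ e : Fin (k ^ ((i : ℕ) + 1)),
        (bw θ true * ((if e = anc k d u i then sgn true else 1) *
            (if e = anc k d v i then sgn true else 1)) +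
         bw θ false * ((if e = anc k d u i then sgn false else 1) *
            (if e = anc k d v i then sgn false else 1)))
        = if (e = anc k d u i ↔ e = anc k d v i) then (1:ℝ) else θ := by
      intro e
      by_cases h1 : e = anc k d u i <;> by_cases h2 : e = anc k d v i
      · rw [if_pos (iff_of_true h1 h2), if_pos h1, if_pos h2, if_pos h1, if_pos h2]
        simp [bw, sgn]
        ring
      · rw [if_neg (fun h : (e = anc k d u i ↔ e = anc k d v i) => h2 (h.mp h1)),
          if_pos h1, if_neg h2, if_pos h1, if_neg h2]
        simp [bw, sgn]
        ring
      · rw [if_neg (fun h : (e = anc k d u i ↔ e = anc k d v i) => h1 (h.mpr h2)),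
          if_neg h1, if_pos h2, if_neg h1, if_pos h2]
        simp [bw, sgn]
        ring
      · rw [if_pos (iff_of_false h1 h2), if_neg h1, if_neg h2, if_neg h1, if_neg h2]
        simp [bw, sgn]
        ring
    rw [Finset.prod_congr rfl fun e _ => he e]
    by_cases hav : anc k d u i = anc k d v i
    · have : ∀ e : Fin (k ^ ((i : ℕ) + 1)), (e = anc k d u i ↔ e = anc k d v i) := by
        intro e; rw [hav]
      simp [hav, this]
    · rw [Finset.prod_ite, Finset.prod_const_one, Finset.prod_const, one_mul]
      have hf : (univ.filter fun e : Fin (k ^ ((i : ℕ) + 1)) =>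
          ¬(e = anc k d u i ↔ e = anc k d v i)) = {anc k d u i, anc k d v i} := by
        ext e
        simp only [mem_filter, mem_univ, true_and, mem_insert, mem_singleton]
        constructor
        · intro h; by_cases h1 : e = anc k d u i
          · exact Or.inl h1
          · by_cases h2 : e = anc k d v i
            · exact Or.inr h2
            · exact absurd (iff_of_false h1 h2) h
        · rintro (rfl | rfl)
          · exact fun h => hav (h.mp rfl)
          · exact fun h => hav ((h.mpr rfl).symm)
      rw [hf, Finset.card_insert_of_notMem (by simp [hav]), Finset.card_singleton,
        if_neg hav]
  rw [Finset.prod_congr rfl fun i _ => step1 i, Finset.prod_ite, Finset.prod_const_one,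
    Finset.prod_const, one_mul, ← pow_mul]

lemma bwt_eq (θ : ℝ) {k d : ℕ} (ω : BOmega k d) :
    bwt θ ω = (1 / 2) * ∏ i, ∏ e, bw θ (ω.2 i e) := rfl

lemma bPr_pair (θ : ℝ) {k d : ℕ} (u v : Fin (k ^ d)) :
    bPr θ k d (fun ω => leafLabel ω u = leafLabel ω v)
      = 1 / 2 + θ ^ (2 * (univ.filter fun i : Fin d => anc k d u i ≠ anc k d v i).card) / 2 := by
  classical
  have key : ∀ ω : BOmega k d,
      (@ite ℝ (leafLabel ω u = leafLabel ω v) (Classical.propDecidable _) (bwt θ ω) 0)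
      = ((1 / 2) * ∏ i, ∏ e, bw θ (ω.2 i e)) *
          ((1 + (∏ i, sgn (ω.2 i (anc k d u i))) * (∏ i, sgn (ω.2 i (anc k d v i)))) / 2) := by
    intro ω
    have hsu : (∏ i, sgn (ω.2 i (anc k d u i)))
        = (-1 : ℝ) ^ (univ.filter fun i : Fin d => ω.2 i (anc k d u i)).card := by
      simp only [sgn]
      rw [Finset.prod_ite, Finset.prod_const, Finset.prod_const, one_pow, mul_one]
    have hsv : (∏ i, sgn (ω.2 i (anc k d v i)))
        = (-1 : ℝ) ^ (univ.filter fun i : Fin d => ω.2 i (anc k d v i)).card := by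
      simp only [sgn]
      rw [Finset.prod_ite, Finset.prod_const, Finset.prod_const, one_pow, mul_one]
    set cu := (univ.filter fun i : Fin d => ω.2 i (anc k d u i)).card with hcu
    set cv := (univ.filter fun i : Fin d => ω.2 i (anc k d v i)).card with hcv
    rw [bwt_eq, hsu, hsv]
    by_cases hu : cu % 2 = 1 <;> by_cases hv : cv % 2 = 1
    · have h1 : ((-1 : ℝ)) ^ cu = -1 := Odd.neg_one_pow (Nat.odd_iff.2 hu)
      have h2 : ((-1 : ℝ)) ^ cv = -1 := Odd.neg_one_pow (Nat.odd_iff.2 hv)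
      rw [if_pos (by simp [leafLabel, ← hcu, ← hcv, hu, hv]), h1, h2]
      ring
    · have h1 : ((-1 : ℝ)) ^ cu = -1 := Odd.neg_one_pow (Nat.odd_iff.2 hu)
      have h2 : ((-1 : ℝ)) ^ cv = 1 := Even.neg_one_pow (Nat.even_iff.2 (by omega))
      rw [if_neg (by simp [leafLabel, ← hcu, ← hcv, hu, hv]), h1, h2]
      ring
    · have h1 : ((-1 : ℝ)) ^ cu = 1 := Even.neg_one_pow (Nat.even_iff.2 (by omega))
      have h2 : ((-1 : ℝ)) ^ cv = -1 := Odd.neg_one_pow (Nat.odd_iff.2 hv)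
      rw [if_neg (by simp [leafLabel, ← hcu, ← hcv, hu, hv]), h1, h2]
      ring
    · have h1 : ((-1 : ℝ)) ^ cu = 1 := Even.neg_one_pow (Nat.even_iff.2 (by omega))
      have h2 : ((-1 : ℝ)) ^ cv = 1 := Even.neg_one_pow (Nat.even_iff.2 (by omega))
      rw [if_pos (by simp [leafLabel, ← hcu, ← hcv, hu, hv]), h1, h2]
      ring
  simp only [bPr]
  rw [Finset.sum_congr rfl fun ω (_ : ω ∈ univ) => key ω]
  rw [Fintype.sum_prod_type, Fintype.sum_bool]
  have hs : ∑ g : (∀ i : Fin d, Fin (k ^ ((i : ℕ) + 1)) → Bool),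
      ((1 / 2) * ∏ i, ∏ e, bw θ (g i e)) *
          ((1 + (∏ i, sgn (g i (anc k d u i))) * (∏ i, sgn (g i (anc k d v i)))) / 2)
      = (1 / 4) * (1 + θ ^ (2 * (univ.filter fun i : Fin d =>
          anc k d u i ≠ anc k d v i).card)) := by
    calc ∑ g : (∀ i : Fin d, Fin (k ^ ((i : ℕ) + 1)) → Bool),
        ((1 / 2) * ∏ i, ∏ e, bw θ (g i e)) *
          ((1 + (∏ i, sgn (g i (anc k d u i))) * (∏ i, sgn (g i (anc k d v i)))) / 2)
        = ∑ g : (∀ i : Fin d, Fin (k ^ ((i : ℕ) + 1)) → Bool),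
            (1 / 4) * ((∏ i, ∏ e, bw θ (g i e)) + (∏ i, ∏ e, bw θ (g i e)) *
              ((∏ i, sgn (g i (anc k d u i))) * (∏ i, sgn (g i (anc k d v i))))) :=
          Finset.sum_congr rfl fun g _ => by ring
      _ = (1 / 4) * ∑ g : (∀ i : Fin d, Fin (k ^ ((i : ℕ) + 1)) → Bool),
            ((∏ i, ∏ e, bw θ (g i e)) + (∏ i, ∏ e, bw θ (g i e)) *
              ((∏ i, sgn (g i (anc k d u i))) * (∏ i, sgn (g i (anc k d v i))))) :=
          (Finset.mul_sum _ _ _).symm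
      _ = (1 / 4) * ((∑ g : (∀ i : Fin d, Fin (k ^ ((i : ℕ) + 1)) → Bool),
              ∏ i, ∏ e, bw θ (g i e))
            + ∑ g : (∀ i : Fin d, Fin (k ^ ((i : ℕ) + 1)) → Bool),
                (∏ i, ∏ e, bw θ (g i e)) *
                  ((∏ i, sgn (g i (anc k d u i))) * (∏ i, sgn (g i (anc k d v i))))) := by
          rw [Finset.sum_add_distrib]
      _ = (1 / 4) * (1 + θ ^ (2 * (univ.filter fun i : Fin d =>
            anc k d u i ≠ anc k d v i).card)) := by
          rw [sum_pi_bw, corr]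
  rw [hs]
  ring

lemma bPr_root (θ : ℝ) {k d : ℕ} (u : Fin (k ^ d)) :
    bPr θ k d (fun ω => leafLabel ω u = true) = 1 / 2 := by
  classical
  simp only [bPr]
  rw [Fintype.sum_prod_type, Fintype.sum_bool, ← Finset.sum_add_distrib]
  have h : ∀ g : (∀ i : Fin d, Fin (k ^ ((i : ℕ) + 1)) → Bool),
      (@ite ℝ (leafLabel (true, g) u = true) (Classical.propDecidable _) (bwt θ (true, g)) 0)
      + (@ite ℝ (leafLabel (false, g) u = true) (Classical.propDecidable _) (bwt θ (false, g)) 0)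
      = (1 / 2) * ∏ i, ∏ e, bw θ (g i e) := by
    intro g
    by_cases hb : (univ.filter fun i : Fin d => (g i (anc k d u i) : Bool)).card % 2 = 1
    · rw [if_neg (by simp [leafLabel, hb]), if_pos (by simp [leafLabel, hb]), zero_add, bwt_eq]
    · rw [if_pos (by simp [leafLabel, hb]), if_neg (by simp [leafLabel, hb]), add_zero, bwt_eq]
  rw [Finset.sum_congr rfl fun g (_ : g ∈ univ) => h g, ← Finset.mul_sum, sum_pi_bw, mul_one]

lemma bPr_true (θ : ℝ) (k d : ℕ) : bPr θ k d (fun _ => True) = 1 := by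
  classical
  simp only [bPr, if_true]
  rw [Fintype.sum_prod_type, Fintype.sum_bool, ← Finset.sum_add_distrib]
  calc ∑ g : (∀ i : Fin d, Fin (k ^ ((i : ℕ) + 1)) → Bool), (bwt θ (true, g) + bwt θ (false, g))
      = ∑ g : (∀ i : Fin d, Fin (k ^ ((i : ℕ) + 1)) → Bool), ∏ i, ∏ e, bw θ (g i e) :=
        Finset.sum_congr rfl fun g _ => by rw [bwt_eq, bwt_eq]; ring
    _ = 1 := sum_pi_bw

lemma sum_filter_bPr (θ : ℝ) (k d : ℕ) (P : (Fin (k ^ d) → Bool) → Prop) [DecidablePred P] :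
    ∑ x ∈ univ.filter P, bPr θ k d (fun ω => ∀ v, leafLabel ω v = x v)
      = bPr θ k d (fun ω => P (fun v => leafLabel ω v)) := by
  classical
  simp only [bPr]
  rw [Finset.sum_comm]
  refine Finset.sum_congr rfl fun ω _ => ?_
  have hx : ∀ x : Fin (k ^ d) → Bool,
      (∀ v, leafLabel ω v = x v) ↔ x = fun v => leafLabel ω v :=
    fun x => ⟨fun h => funext fun v => (h v).symm, fun h v => (congrFun h v).symm⟩
  calc (∑ x ∈ univ.filter P,
        @ite ℝ (∀ v, leafLabel ω v = x v) (Classical.propDecidable _) (bwt θ ω) 0)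
      = ∑ x ∈ univ.filter P, (if x = (fun v => leafLabel ω v) then bwt θ ω else 0) :=
        Finset.sum_congr rfl fun x _ =>
          @if_congr ℝ _ _ (Classical.propDecidable _) _ _ _ _ _ (hx x) rfl rfl
    _ = if (fun v => leafLabel ω v) ∈ univ.filter P then bwt θ ω else 0 :=
        Finset.sum_ite_eq' (univ.filter P) (fun v => leafLabel ω v) (fun _ => bwt θ ω)
    _ = @ite ℝ (P (fun v => leafLabel ω v)) (Classical.propDecidable _) (bwt θ ω) 0 := by
        by_cases hP : P (fun v => leafLabel ω v)
        · rw [if_pos (by simp [hP]), if_pos hP]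
        · rw [if_neg (by simp [hP]), if_neg hP]

lemma sum_filter_count {m n : ℕ} (f : (Fin m → Bool) → (Fin n → Bool))
    (P : (Fin n → Bool) → Prop) [DecidablePred P] :
    ∑ x ∈ univ.filter P, (univ.filter fun w => f w = x).card
      = (univ.filter fun w => P (f w)).card := by
  classical
  simp only [Finset.card_filter]
  rw [Finset.sum_comm]
  refine Finset.sum_congr rfl fun w _ => ?_
  have hx : ∀ x : Fin n → Bool, (f w = x) ↔ (x = f w) := fun x => eq_comm
  rw [Finset.sum_congr rfl fun x (_ : x ∈ univ.filter P) =>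
    if_congr (hx x) (rfl : (1:ℕ) = 1) (rfl : (0:ℕ) = 0)]
  rw [Finset.sum_ite_eq' (univ.filter P) (f w) (fun _ => (1:ℕ))]
  by_cases hP : P (f w)
  · rw [if_pos (by simp [hP]), if_pos hP]
  · rw [if_neg (by simp [hP]), if_neg hP]

lemma tv_lower {α : Type*} [Fintype α] (p q : α → ℝ) (hp : ∑ x, p x = 1) (hq : ∑ x, q x = 1)
    (P : α → Prop) [DecidablePred P] :
    |∑ x ∈ univ.filter P, p x - ∑ x ∈ univ.filter P, q x| ≤ (1 / 2) * ∑ x, |p x - q x| := by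
  classical
  have hsplit : ∑ x, |p x - q x| = ∑ x ∈ univ.filter P, |p x - q x|
      + ∑ x ∈ univ.filter fun x => ¬ P x, |p x - q x| :=
    (Finset.sum_filter_add_sum_filter_not univ P _).symm
  have h1 : |∑ x ∈ univ.filter P, (p x - q x)| ≤ ∑ x ∈ univ.filter P, |p x - q x| :=
    Finset.abs_sum_le_sum_abs _ _
  have h2 : |∑ x ∈ univ.filter fun x => ¬ P x, (p x - q x)|
      ≤ ∑ x ∈ univ.filter fun x => ¬ P x, |p x - q x| := Finset.abs_sum_le_sum_abs _ _
  have hsum : ∑ x ∈ univ.filter P, (p x - q x)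
      + ∑ x ∈ univ.filter fun x => ¬ P x, (p x - q x) = 0 := by
    rw [Finset.sum_filter_add_sum_filter_not univ P (fun x => p x - q x),
      Finset.sum_sub_distrib, hp, hq]
    ring
  have e1 : ∑ x ∈ univ.filter P, (p x - q x)
      = ∑ x ∈ univ.filter P, p x - ∑ x ∈ univ.filter P, q x := Finset.sum_sub_distrib _ _
  have e2 : ∑ x ∈ univ.filter fun x => ¬ P x, (p x - q x)
      = - (∑ x ∈ univ.filter P, p x - ∑ x ∈ univ.filter P, q x) := by
    rw [← e1]; linarith
  rw [e1] at h1
  rw [e2, abs_neg] at h2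
  linarith

lemma total_p (θ : ℝ) (k d : ℕ) :
    ∑ x : Fin (k ^ d) → Bool, bPr θ k d (fun ω => ∀ v, leafLabel ω v = x v) = 1 := by
  classical
  have h := sum_filter_bPr θ k d (fun _ => True)
  simp only [Finset.filter_true] at h
  rw [h]
  exact bPr_true θ k d

lemma total_q {m n : ℕ} (f : (Fin m → Bool) → (Fin n → Bool)) :
    ∑ x : Fin n → Bool, ((univ.filter fun w => f w = x).card : ℝ) / 2 ^ m = 1 := by
  classical
  rw [← Finset.sum_div]
  have h := sum_filter_count f (fun _ => True)
  simp only [Finset.filter_true] at h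
  rw [← Nat.cast_sum, h, Finset.card_univ]
  have hcard : Fintype.card (Fin m → Bool) = 2 ^ m := by
    simp [Fintype.card_fun]
  rw [hcard]
  push_cast
  field_simp

lemma count_local {m : ℕ} (p : (Fin m → Bool) → Prop) [DecidablePred p]
    (S : Finset (Fin m)) (hS : ∀ w w' : Fin m → Bool, (∀ i ∈ S, w i = w' i) → (p w ↔ p w'))
    (cc : ℕ) (hcard : S.card ≤ cc) :
    ∃ j : ℕ, j ≤ 2 ^ cc ∧ ((univ.filter p).card : ℝ) / 2 ^ m = (j : ℝ) / 2 ^ cc := by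
  classical
  set E := (Equiv.piEquivPiSubtypeProd (fun i : Fin m => i ∈ S) (fun _ => Bool)) with hE
  set pr : ({ i // i ∈ S } → Bool) → Prop := fun r => p (E.symm (r, fun _ => false)) with hpr
  have hfac : ∀ y : ({i // i ∈ S} → Bool) × ({i // ¬ i ∈ S} → Bool), p (E.symm y) ↔ pr y.1 := by
    rintro ⟨r, t⟩
    refine hS _ _ fun i hi => ?_
    simp [hE, Equiv.piEquivPiSubtypeProd, hi]
  have e : {w // p w} ≃ {r : {i // i ∈ S} → Bool // pr r} × ({i // ¬ i ∈ S} → Bool) :=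
    ((E.subtypeEquiv fun w => by rw [Equiv.symm_apply_apply]).trans
      (Equiv.subtypeEquivRight hfac)).trans Equiv.prodSubtypeFstEquivSubtypeProd
  have hcard1 : (univ.filter p).card = Fintype.card {w // p w} := (Fintype.card_subtype p).symm
  set A := Fintype.card {r : {i // i ∈ S} → Bool // pr r} with hA
  have hsle : S.card ≤ m := by
    simpa using Finset.card_le_card (Finset.subset_univ S)
  have hN : (univ.filter p).card = A * 2 ^ (m - S.card) := by
    rw [hcard1, Fintype.card_congr e, Fintype.card_prod]
    congr 1
    rw [Fintype.card_fun, Fintype.card_bool, Fintype.card_subtype_compl]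
    simp [Fintype.card_coe]
  have hAle : A ≤ 2 ^ S.card := by
    calc A ≤ Fintype.card ({i // i ∈ S} → Bool) := Fintype.card_subtype_le _
      _ = 2 ^ S.card := by rw [Fintype.card_fun]; simp
  refine ⟨A * 2 ^ (cc - S.card), ?_, ?_⟩
  · calc A * 2 ^ (cc - S.card) ≤ 2 ^ S.card * 2 ^ (cc - S.card) :=
        Nat.mul_le_mul_right _ hAle
      _ = 2 ^ cc := by rw [← pow_add]; congr 1; omega
  · have hkey : (univ.filter p).card * 2 ^ cc = (A * 2 ^ (cc - S.card)) * 2 ^ m := by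
      rw [hN, mul_assoc, mul_assoc, ← pow_add, ← pow_add]
      congr 2
      omega
    have h2m : (2 : ℝ) ^ m ≠ 0 := by positivity
    have h2c : (2 : ℝ) ^ cc ≠ 0 := by positivity
    rw [div_eq_div_iff h2m h2c]
    exact_mod_cast hkey

lemma card_filter_ge {d a : ℕ} (ha : a ≤ d) :
    (univ.filter fun i : Fin d => a ≤ (i : ℕ)).card = d - a := by
  classical
  have h1 : ((Finset.range d).filter fun x => a ≤ x) = Finset.Ico a d := by
    ext x
    simp only [Finset.mem_filter, Finset.mem_range, Finset.mem_Ico]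
    omega
  rw [← Nat.card_Ico a d]
  refine Finset.card_nbij (fun i => (i : ℕ)) ?_ ?_ ?_
  · intro x hx
    simp only [Finset.mem_coe, Finset.mem_filter, Finset.mem_univ, true_and] at hx
    simp only [Finset.mem_coe, Finset.mem_Ico]
    exact ⟨hx, x.isLt⟩
  · intro x _ y _ hxy
    exact Fin.val_injective hxy
  · intro x hx
    simp only [Finset.coe_Ico, Set.mem_Ico] at hx
    exact ⟨⟨x, hx.2⟩, by simp [hx.1], rfl⟩

/-- Fix `0 < θ < 1` and `k ≥ 2`. Let `f : {0,1}^m → {0,1}^{k^d}`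
be a function each of whose output bits depends on at most `c` input bits, let
`W` be a vector of independent uniform bits and `X' = f(W)`. Let `d'` be the
smallest positive integer with `θ^{2d'} ≤ 2^{-2c}` and suppose `d' ≤ d` (so
`n = k^d ≥ k^{d'}`). Then the total variation distance between the law of `X'`
and the law of the leaf labels `X^(d)` of the broadcast process is at least
`θ^{2d'}/4 > 0`. -/
theorem nc0_generation_tv_lower_bound (θ : ℝ) (hθ₁ : 0 < θ) (hθ₂ : θ < 1)
    (k : ℕ) (hk : 2 ≤ k) (d c m : ℕ)
    (f : (Fin m → Bool) → Fin (k ^ d) → Bool)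
    (hloc : ∀ j : Fin (k ^ d), ∃ S : Finset (Fin m), S.card ≤ c ∧
      ∀ w w' : Fin m → Bool, (∀ i ∈ S, w i = w' i) → f w j = f w' j)
    (d' : ℕ) (hd'pos : 0 < d')
    (hd'le : θ ^ (2 * d') ≤ 1 / 2 ^ (2 * c))
    (hd'min : ∀ e : ℕ, 0 < e → e < d' → 1 / 2 ^ (2 * c) < θ ^ (2 * e))
    (hd'd : d' ≤ d) :
    θ ^ (2 * d') / 4 ≤
        (1 / 2) * ∑ x : Fin (k ^ d) → Bool,
          |bPr θ k d (fun ω => ∀ v, leafLabel ω v = x v) -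
            ((univ.filter fun w : Fin m → Bool => f w = x).card : ℝ) / 2 ^ m|
      ∧ 0 < θ ^ (2 * d') / 4 := by
  classical
  have ht0 : 0 < θ ^ (2 * d') := pow_pos hθ₁ _
  have ht1 : θ ^ (2 * d') < 1 := pow_lt_one₀ hθ₁.le hθ₂ (by omega)
  refine ⟨?_, by positivity⟩
  have hk1 : 1 < k := by omega
  have hkd : 0 < k ^ d := pow_pos (by omega) d
  have hvlt : k ^ (d' - 1) < k ^ d := Nat.pow_lt_pow_right hk1 (by omega)
  set u : Fin (k ^ d) := ⟨0, hkd⟩ with hu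
  set v : Fin (k ^ d) := ⟨k ^ (d' - 1), hvlt⟩ with hv
  rcases Nat.eq_zero_or_pos c with hc | hc
  · -- c = 0 : use the event x u = true
    subst hc
    refine le_trans ?_ (tv_lower
      (fun x => bPr θ k d (fun ω => ∀ w, leafLabel ω w = x w))
      (fun x => ((univ.filter fun w : Fin m → Bool => f w = x).card : ℝ) / 2 ^ m)
      (total_p θ k d) (total_q f) (fun x => x u = true))
    have hPp : ∑ x ∈ univ.filter (fun x : Fin (k ^ d) → Bool => x u = true),
        bPr θ k d (fun ω => ∀ w, leafLabel ω w = x w) = 1 / 2 := by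
      rw [sum_filter_bPr θ k d (fun x => x u = true)]
      exact bPr_root θ u
    obtain ⟨Su, hSuc, hSu⟩ := hloc u
    obtain ⟨j, hj, hjeq⟩ := count_local (fun w => f w u = true) Su
      (fun w w' h => by
        show (f w u = true) ↔ (f w' u = true)
        rw [hSu w w' h]) (2 * 0) (by omega)
    have hPq : ∑ x ∈ univ.filter (fun x : Fin (k ^ d) → Bool => x u = true),
        ((univ.filter fun w : Fin m → Bool => f w = x).card : ℝ) / 2 ^ m
        = (j : ℝ) / 2 ^ (2 * 0) := by
      rw [← Finset.sum_div, ← Nat.cast_sum, sum_filter_count f (fun x => x u = true)]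
      exact hjeq
    rw [hPp, hPq]
    have hj1 : j ≤ 1 := by simpa using hj
    have habs : |(1:ℝ)/2 - (j:ℝ)/2^(2*0)| = 1/2 := by
      interval_cases j <;> norm_num
    rw [habs]
    linarith
  · -- c ≥ 1 : use the event x u = x v
    refine le_trans ?_ (tv_lower
      (fun x => bPr θ k d (fun ω => ∀ w, leafLabel ω w = x w))
      (fun x => ((univ.filter fun w : Fin m → Bool => f w = x).card : ℝ) / 2 ^ m)
      (total_p θ k d) (total_q f) (fun x => x u = x v))
    have hanc : ∀ i : Fin d, (anc k d u i = anc k d v i) ↔ (i : ℕ) < d - d' := by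
      intro i
      rw [Fin.ext_iff]
      show ((0 : ℕ) / k ^ (d - ((i : ℕ) + 1)) = k ^ (d' - 1) / k ^ (d - ((i : ℕ) + 1))) ↔ _
      rw [Nat.zero_div, eq_comm,
        Nat.div_eq_zero_iff, or_iff_right (pow_ne_zero (d - ((i : ℕ) + 1)) (by omega : k ≠ 0)),
        Nat.pow_lt_pow_iff_right hk1]
      have hi := i.isLt
      omega
    have hD : (univ.filter fun i : Fin d => anc k d u i ≠ anc k d v i).card = d' := by
      have hfe : (univ.filter fun i : Fin d => anc k d u i ≠ anc k d v i)
          = univ.filter fun i : Fin d => (d - d') ≤ (i : ℕ) := by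
        refine Finset.filter_congr fun i _ => ?_
        rw [Ne, hanc i, not_lt]
      rw [hfe, card_filter_ge (Nat.sub_le d d')]
      omega
    have hPp : ∑ x ∈ univ.filter (fun x : Fin (k ^ d) → Bool => x u = x v),
        bPr θ k d (fun ω => ∀ w, leafLabel ω w = x w)
        = 1 / 2 + θ ^ (2 * d') / 2 := by
      rw [sum_filter_bPr θ k d (fun x => x u = x v)]
      have := bPr_pair θ u v
      rw [hD] at this
      exact this
    obtain ⟨Su, hSuc, hSu⟩ := hloc u
    obtain ⟨Sv, hSvc, hSv⟩ := hloc v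
    obtain ⟨j, hj, hjeq⟩ := count_local (fun w => f w u = f w v) (Su ∪ Sv)
      (fun w w' h => by
        show (f w u = f w v) ↔ (f w' u = f w' v)
        rw [hSu w w' fun i hi => h i (Finset.mem_union_left _ hi),
          hSv w w' fun i hi => h i (Finset.mem_union_right _ hi)])
      (2 * c) (le_trans (Finset.card_union_le _ _) (by omega))
    have hPq : ∑ x ∈ univ.filter (fun x : Fin (k ^ d) → Bool => x u = x v),
        ((univ.filter fun w : Fin m → Bool => f w = x).card : ℝ) / 2 ^ m
        = (j : ℝ) / 2 ^ (2 * c) := by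
      rw [← Finset.sum_div, ← Nat.cast_sum, sum_filter_count f (fun x => x u = x v)]
      exact hjeq
    rw [hPp, hPq]
    have h2pos : (0 : ℝ) < 2 ^ (2 * c) := by positivity
    have h2T : (2 : ℝ) ^ (2 * c) = 2 * 2 ^ (2 * c - 1) := by
      rw [← pow_succ']
      congr 1
      omega
    rcases le_or_gt j (2 ^ (2 * c - 1)) with hcase | hcase
    · have hQ : (j : ℝ) / 2 ^ (2 * c) ≤ 1 / 2 := by
        rw [div_le_iff₀ h2pos, h2T]
        have : (j : ℝ) ≤ 2 ^ (2 * c - 1) := by exact_mod_cast hcase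
        push_cast
        linarith
      refine le_trans ?_ (le_abs_self _)
      linarith
    · have hQ : 1 / 2 + 1 / 2 ^ (2 * c) ≤ (j : ℝ) / 2 ^ (2 * c) := by
        rw [le_div_iff₀ h2pos]
        have : (2 : ℝ) ^ (2 * c - 1) + 1 ≤ (j : ℝ) := by
          have : 2 ^ (2 * c - 1) + 1 ≤ j := hcase
          exact_mod_cast this
        rw [h2T]
        field_simp
        nlinarith [this]
      rw [abs_sub_comm]
      refine le_trans ?_ (le_abs_self _)
      have hle : θ ^ (2 * d') ≤ 1 / 2 ^ (2 * c) := hd'le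
      linarith
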